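/- arXiv:2109.10846 — 2 statements merged into one kernel-verified Lean document; each statement's English description precedes it below -/
import Mathlib

section
/- Let T be a left-invertible operator with the wandering subspace property, T' = T(T*T)^{-1} its Cauchy dual, M_n the closed span of ⋃_{k=0}^n T^k(ker T*), and S_n(w) = Σ_{k=0}^n w̄^k T'^k. Then w ∈ ℂ is a bounded point evaluation for T if and only if sup_n ‖P_{M_n} S_n(w)|_{ker T*}‖ < ∞; moreover, in that case ‖E_w*‖ = sup_n ‖P_{M_n} S_n(w)|_{ker T*}‖. -/
open ContinuousLinearMap Submodule Filter

noncomputable section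

variable {H : Type*} [NormedAddCommGroup H] [InnerProductSpace ℂ H] [CompleteSpace H]

/-- The wandering subspace `ker T*`. -/
def kerAdj (T : H →L[ℂ] H) : Submodule ℂ H := LinearMap.ker (ContinuousLinearMap.adjoint T).toLinearMap

/-- `T` has the wandering subspace property: the closed linear span of
`⋃ₙ Tⁿ(ker T*)` is all of `H`. -/
def WSP (T : H →L[ℂ] H) : Prop :=
  (⨆ n : ℕ, (kerAdj T).map (T ^ n).toLinearMap).topologicalClosure = ⊤

/-- `w` is a bounded point evaluation for `T`: `‖p(w)‖ ≤ c ‖p(T)‖` for all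
`ker T*`-valued polynomials `p`, where `p(T) = Σ Tⁿ xₙ` for `p(z) = Σ xₙ zⁿ`. -/
def IsBPE (T : H →L[ℂ] H) (w : ℂ) : Prop :=
  ∃ c > (0 : ℝ), ∀ (k : ℕ) (x : ℕ → H), (∀ n, x n ∈ kerAdj T) →
    ‖∑ n ∈ Finset.range (k + 1), w ^ n • x n‖ ≤
      c * ‖∑ n ∈ Finset.range (k + 1), (T ^ n) (x n)‖

/-- `E` is the (continuous extension of the) evaluation operator at `w`:
it takes values in `ker T*` and sends `p(T)` to `p(w)`. -/
def IsEval (T : H →L[ℂ] H) (w : ℂ) (E : H →L[ℂ] H) : Prop :=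
  (∀ y, E y ∈ kerAdj T) ∧
    ∀ (k : ℕ) (x : ℕ → H), (∀ n, x n ∈ kerAdj T) →
      E (∑ n ∈ Finset.range (k + 1), (T ^ n) (x n)) =
        ∑ n ∈ Finset.range (k + 1), w ^ n • x n

/-!
The adjoint of `Bₙ = P_{M_n} S_n(w)|_{ker T*}` is `Q Sₙ(w)* P_{M_n}`, with `Q` the projection onto
`ker T*` and `Sₙ(w)* = ∑ wʲ T'*ʲ`. Since `T'* T = 1` and `T'*` kills `ker T*`, the vector
`T'*ʲ Tᵐ x` (`x ∈ ker T*`) is `Tᵐ⁻ʲ x`, `x` or `0` according as `j < m`, `j = m` or `j > m`, and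
`Q` kills the range of `T`; hence `Bₙ*` sends `p(T)` to `p(w)` for every `ker T*`-valued
polynomial `p` of degree `≤ n`. So `‖Bₙ‖ = ‖Bₙ*‖` is the norm of evaluation at `w` on `M_n`, and
as `⋃ M_n` is dense (wandering subspace property), the supremum of these norms is `‖E_w‖`.
-/

instance kerAdj.completeSpace (T : H →L[ℂ] H) : CompleteSpace (kerAdj T) :=
  (ContinuousLinearMap.isClosed_ker (ContinuousLinearMap.adjoint T)).completeSpace_coe

theorem Continuous.norm_le_mul_norm_of_mem_closure {E F : Type*} [SeminormedAddGroup E]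
    [SeminormedAddGroup F] {f : E → F} (hf : Continuous f) {s : Set E} {c : ℝ}
    (h : ∀ y ∈ s, ‖f y‖ ≤ c * ‖y‖) {y : E} (hy : y ∈ closure s) : ‖f y‖ ≤ c * ‖y‖ :=
  closure_minimal h (isClosed_le hf.norm (continuous_const.mul continuous_norm)) hy

theorem apply_mem_orthogonal_kerAdj (T : H →L[ℂ] H) (z : H) : T z ∈ (kerAdj T)ᗮ := by
  rw [show kerAdj T = T.rangeᗮ from T.orthogonal_range.symm]
  exact Submodule.le_orthogonal_orthogonal _ ⟨z, rfl⟩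

theorem adjoint_comp_mul_self_of_mul_eq_one {T A : H →L[ℂ] H}
    (hA : (adjoint T ∘L T) ∘L A = 1) : adjoint (T ∘L A) * T = 1 := by
  have h := congrArg adjoint hA
  rw [adjoint_comp, adjoint_comp, adjoint_adjoint, adjoint_one] at h
  rw [adjoint_comp]
  exact h

theorem adjoint_comp_apply_of_mem_kerAdj {x : H} {T A : H →L[ℂ] H} (hx : x ∈ kerAdj T) :
    adjoint (T ∘L A) x = 0 := by
  rw [adjoint_comp, comp_apply, show adjoint T x = 0 from hx, map_zero]

/-- The vectors `p(T) = ∑_{k ≤ n} Tᵏ xₖ` with all `xₖ ∈ ker T*`; `M_n` is its closure. -/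
def polySpan (T : H →L[ℂ] H) (n : ℕ) : Submodule ℂ H :=
  ⨆ k ∈ Finset.range (n + 1), (kerAdj T).map (T ^ k).toLinearMap

theorem mem_polySpan_iff {T : H →L[ℂ] H} {n : ℕ} {y : H} :
    y ∈ polySpan T n ↔ ∃ x : ℕ → H, (∀ m, x m ∈ kerAdj T) ∧
      ∑ m ∈ Finset.range (n + 1), (T ^ m) (x m) = y := by
  rw [polySpan, Submodule.mem_iSup_finset_iff_exists_sum]
  constructor
  · rintro ⟨μ, rfl⟩
    choose x hx hTx using fun m => Submodule.mem_map.mp (μ m).2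
    exact ⟨x, hx, Finset.sum_congr rfl fun m _ => hTx m⟩
  · rintro ⟨x, hx, rfl⟩
    exact ⟨fun m => ⟨(T ^ m) (x m), Submodule.mem_map_of_mem (hx m)⟩, rfl⟩

theorem dense_iUnion_polySpan {T : H →L[ℂ] H} (hT : WSP T) :
    Dense (⋃ n, (polySpan T n : Set H)) := by
  have hdir : Directed (· ≤ ·) (polySpan T) := by
    refine Monotone.directed_le fun n n' hn => biSup_mono fun k hk => ?_
    simp only [Finset.mem_range] at hk ⊢
    omega
  have hle : ⨆ k, (kerAdj T).map (T ^ k).toLinearMap ≤ ⨆ n, polySpan T n :=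
    iSup_le fun k => (le_biSup (fun k => (kerAdj T).map (T ^ k).toLinearMap)
      (Finset.self_mem_range_succ k)).trans (le_iSup (polySpan T) k)
  rw [← Submodule.coe_iSup_of_directed _ hdir, dense_iff_closure_eq,
    ← Submodule.topologicalClosure_coe, Set.eq_univ_iff_forall]
  exact fun y => Submodule.topologicalClosure_mono hle (hT ▸ Submodule.mem_top)

/-- The operator `P_{M_n} S_n(w)|_{ker T*}`. -/
def compressedSum (T T' : H →L[ℂ] H) (w : ℂ) (n : ℕ) : kerAdj T →L[ℂ] H :=
  ((polySpan T n).topologicalClosure.starProjection ∘L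
    ∑ k ∈ Finset.range (n + 1), starRingEnd ℂ w ^ k • T' ^ k) ∘L (kerAdj T).subtypeL

def EvalBound (T : H →L[ℂ] H) (w : ℂ) (c : ℝ) : Prop :=
  ∀ (k : ℕ) (x : ℕ → H), (∀ n, x n ∈ kerAdj T) →
    ‖∑ n ∈ Finset.range (k + 1), w ^ n • x n‖ ≤ c * ‖∑ n ∈ Finset.range (k + 1), (T ^ n) (x n)‖

theorem IsEval.evalBound {T E : H →L[ℂ] H} {w : ℂ} (hE : IsEval T w E) : EvalBound T w ‖E‖ :=
  fun k x hx => hE.2 k x hx ▸ E.le_opNorm _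

section CompressedSum

variable {T T' : H →L[ℂ] H}

theorem starProjection_kerAdj_pow_apply_pow (hT'T : adjoint T' * T = 1)
    (hT'K : ∀ x ∈ kerAdj T, adjoint T' x = 0) {x : H} (hx : x ∈ kerAdj T) (j m : ℕ) :
    (kerAdj T).starProjection ((adjoint T' ^ j) ((T ^ m) x)) = if j = m then x else 0 := by
  have hcancel : ∀ k z, (adjoint T' ^ k) ((T ^ k) z) = z := fun k z => by
    rw [← mul_apply_eq_comp, pow_mul_pow_eq_one k hT'T, one_apply_eq_self]
  rcases lt_trichotomy j m with hjm | rfl | hmj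
  · obtain ⟨d, rfl⟩ : ∃ d, m = j + (d + 1) := ⟨m - j - 1, by omega⟩
    rw [if_neg hjm.ne, pow_add, mul_apply_eq_comp, hcancel, pow_succ', mul_apply_eq_comp,
      Submodule.starProjection_apply_eq_zero_iff]
    exact apply_mem_orthogonal_kerAdj T _
  · rw [if_pos rfl, hcancel, Submodule.starProjection_eq_self_iff.mpr hx]
  · obtain ⟨d, rfl⟩ : ∃ d, j = m + (d + 1) := ⟨j - m - 1, by omega⟩
    rw [if_neg hmj.ne', add_comm, pow_add, mul_apply_eq_comp, hcancel, pow_succ,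
      mul_apply_eq_comp, hT'K x hx, map_zero, map_zero]

theorem starProjection_kerAdj_sum_apply_sum (hT'T : adjoint T' * T = 1)
    (hT'K : ∀ x ∈ kerAdj T, adjoint T' x = 0) (w : ℂ) (n : ℕ) {x : ℕ → H}
    (hx : ∀ m, x m ∈ kerAdj T) :
    (kerAdj T).starProjection ((∑ j ∈ Finset.range (n + 1), w ^ j • adjoint T' ^ j)
        (∑ m ∈ Finset.range (n + 1), (T ^ m) (x m))) =
      ∑ m ∈ Finset.range (n + 1), w ^ m • x m := by
  simp only [sum_apply, smul_apply, map_sum, map_smul,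
    starProjection_kerAdj_pow_apply_pow hT'T hT'K (hx _), smul_ite, smul_zero]
  exact Finset.sum_congr rfl fun m hm => by rw [Finset.sum_ite_eq', if_pos hm]

theorem coe_adjoint_compressedSum_apply (w : ℂ) (n : ℕ) (y : H) :
    (adjoint (compressedSum T T' w n) y : H) =
      (kerAdj T).starProjection ((∑ j ∈ Finset.range (n + 1), w ^ j • adjoint T' ^ j)
        ((polySpan T n).topologicalClosure.starProjection y)) := by
  have hS : adjoint (∑ k ∈ Finset.range (n + 1), starRingEnd ℂ w ^ k • T' ^ k) =
      ∑ j ∈ Finset.range (n + 1), w ^ j • adjoint T' ^ j := by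
    simp only [← star_eq_adjoint, star_sum, star_smul, star_pow, starRingEnd_apply, star_star]
  rw [compressedSum, adjoint_comp, adjoint_comp, Submodule.adjoint_subtypeL,
    (isSelfAdjoint_starProjection _).adjoint_eq, hS]
  rfl

theorem adjoint_compressedSum_apply_starProjection (w : ℂ) (n : ℕ) (y : H) :
    adjoint (compressedSum T T' w n) ((polySpan T n).topologicalClosure.starProjection y) =
      adjoint (compressedSum T T' w n) y := by
  apply Subtype.ext
  rw [coe_adjoint_compressedSum_apply, coe_adjoint_compressedSum_apply,
    Submodule.starProjection_eq_self_iff.mpr (Submodule.starProjection_apply_mem _ y)]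

theorem adjoint_compressedSum_apply_sum (hT'T : adjoint T' * T = 1)
    (hT'K : ∀ x ∈ kerAdj T, adjoint T' x = 0) (w : ℂ) (n : ℕ) {x : ℕ → H}
    (hx : ∀ m, x m ∈ kerAdj T) :
    (adjoint (compressedSum T T' w n) (∑ m ∈ Finset.range (n + 1), (T ^ m) (x m)) : H) =
      ∑ m ∈ Finset.range (n + 1), w ^ m • x m := by
  have hmem : ∑ m ∈ Finset.range (n + 1), (T ^ m) (x m) ∈ (polySpan T n).topologicalClosure :=
    Submodule.le_topologicalClosure _ (mem_polySpan_iff.mpr ⟨x, hx, rfl⟩)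
  rw [coe_adjoint_compressedSum_apply, Submodule.starProjection_eq_self_iff.mpr hmem,
    starProjection_kerAdj_sum_apply_sum hT'T hT'K w n hx]

theorem norm_sum_smul_le_norm_compressedSum_mul (hT'T : adjoint T' * T = 1)
    (hT'K : ∀ x ∈ kerAdj T, adjoint T' x = 0) (w : ℂ) (n : ℕ) {x : ℕ → H}
    (hx : ∀ m, x m ∈ kerAdj T) :
    ‖∑ m ∈ Finset.range (n + 1), w ^ m • x m‖ ≤
      ‖compressedSum T T' w n‖ * ‖∑ m ∈ Finset.range (n + 1), (T ^ m) (x m)‖ := by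
  rw [← adjoint_compressedSum_apply_sum hT'T hT'K w n hx, Submodule.norm_coe,
    ← LinearIsometryEquiv.norm_map adjoint]
  exact le_opNorm _ _

theorem norm_compressedSum_le (hT'T : adjoint T' * T = 1)
    (hT'K : ∀ x ∈ kerAdj T, adjoint T' x = 0) {w : ℂ} {c : ℝ} (hc : 0 ≤ c)
    (h : EvalBound T w c) (n : ℕ) : ‖compressedSum T T' w n‖ ≤ c := by
  set M := (polySpan T n).topologicalClosure
  have hM : ∀ y ∈ M, ‖adjoint (compressedSum T T' w n) y‖ ≤ c * ‖y‖ := by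
    refine fun y hy =>
      (adjoint (compressedSum T T' w n)).continuous.norm_le_mul_norm_of_mem_closure
        (s := polySpan T n) ?_ (by rwa [← Submodule.topologicalClosure_coe])
    intro p hp
    obtain ⟨x, hx, rfl⟩ := mem_polySpan_iff.mp hp
    rw [← Submodule.norm_coe, adjoint_compressedSum_apply_sum hT'T hT'K w n hx]
    exact h n x hx
  rw [← LinearIsometryEquiv.norm_map adjoint]
  refine opNorm_le_bound _ hc fun z => ?_
  calc ‖adjoint (compressedSum T T' w n) z‖
      = ‖adjoint (compressedSum T T' w n) (M.starProjection z)‖ := by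
        rw [adjoint_compressedSum_apply_starProjection]
    _ ≤ c * ‖M.starProjection z‖ := hM _ (M.starProjection_apply_mem z)
    _ ≤ c * ‖z‖ := by gcongr; exact M.norm_starProjection_apply_le z

theorem norm_le_iSup_norm_compressedSum (hT'T : adjoint T' * T = 1)
    (hT'K : ∀ x ∈ kerAdj T, adjoint T' x = 0) (hT : WSP T) {w : ℂ}
    (hbdd : BddAbove (Set.range fun n => ‖compressedSum T T' w n‖)) {E : H →L[ℂ] H}
    (hE : IsEval T w E) : ‖E‖ ≤ ⨆ n, ‖compressedSum T T' w n‖ := by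
  refine opNorm_le_bound _ (le_ciSup_of_le hbdd 0 (norm_nonneg (compressedSum T T' w 0))) fun y =>
    E.continuous.norm_le_mul_norm_of_mem_closure ?_
      ((dense_iUnion_polySpan hT).closure_eq ▸ Set.mem_univ y)
  intro p hp
  obtain ⟨n, hn⟩ := Set.mem_iUnion.mp hp
  obtain ⟨x, hx, rfl⟩ := mem_polySpan_iff.mp hn
  rw [hE.2 n x hx]
  exact (norm_sum_smul_le_norm_compressedSum_mul hT'T hT'K w n hx).trans
    (mul_le_mul_of_nonneg_right (le_ciSup hbdd n) (norm_nonneg _))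

end CompressedSum

theorem stmt_11_general (T T' A : H →L[ℂ] H) (hT : WSP T)
    (hA2 : (ContinuousLinearMap.adjoint T ∘L T) ∘L A = 1)
    (hT' : T' = T ∘L A) (w : ℂ)
    (M : ℕ → Submodule ℂ H)
    (hM : ∀ n, M n =
      (⨆ k ∈ Finset.range (n + 1), (kerAdj T).map (T ^ k).toLinearMap).topologicalClosure)
    (P : ℕ → (H →L[ℂ] H)) (hP : ∀ n (x : H), P n x ∈ M n ∧ x - P n x ∈ (M n)ᗮ)
    (S : ℕ → (H →L[ℂ] H))
    (hS : ∀ n, S n = ∑ k ∈ Finset.range (n + 1), (starRingEnd ℂ w) ^ k • (T' ^ k)) :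
    (IsBPE T w ↔ ∃ C : ℝ, ∀ n, ‖(P n ∘L S n) ∘L (kerAdj T).subtypeL‖ ≤ C) ∧
    (IsBPE T w → ∀ E : H →L[ℂ] H, IsEval T w E →
      ‖ContinuousLinearMap.adjoint E‖ = ⨆ n, ‖(P n ∘L S n) ∘L (kerAdj T).subtypeL‖) := by
  have hT'T : adjoint T' * T = 1 := hT' ▸ adjoint_comp_mul_self_of_mul_eq_one hA2
  have hT'K : ∀ x ∈ kerAdj T, adjoint T' x = 0 := fun x hx =>
    hT' ▸ adjoint_comp_apply_of_mem_kerAdj hx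
  obtain rfl : M = fun n => (polySpan T n).topologicalClosure := funext hM
  have hB : ∀ n, (P n ∘L S n) ∘L (kerAdj T).subtypeL = compressedSum T T' w n := fun n => by
    have hPn : P n = (polySpan T n).topologicalClosure.starProjection := ContinuousLinearMap.ext
      fun x => (Submodule.eq_starProjection_of_mem_orthogonal (hP n x).1 (hP n x).2).symm
    rw [hPn, hS n, compressedSum]
  simp only [hB]
  refine ⟨⟨fun ⟨c, hc, h⟩ => ⟨c, norm_compressedSum_le hT'T hT'K hc.le h⟩,
    fun ⟨C, hC⟩ => ⟨max C 1, by positivity, fun k x hx => ?_⟩⟩, ?_⟩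
  · calc _ ≤ ‖compressedSum T T' w k‖ * _ :=
          norm_sum_smul_le_norm_compressedSum_mul hT'T hT'K w k hx
      _ ≤ max C 1 * _ := by gcongr; exact (hC k).trans (le_max_left C 1)
  · rintro ⟨c, hc, h⟩ E hE
    have hbdd : BddAbove (Set.range fun n => ‖compressedSum T T' w n‖) :=
      ⟨c, Set.forall_mem_range.mpr (norm_compressedSum_le hT'T hT'K hc.le h)⟩
    rw [LinearIsometryEquiv.norm_map adjoint]
    exact le_antisymm (norm_le_iSup_norm_compressedSum hT'T hT'K hT hbdd hE)
      (ciSup_le (norm_compressedSum_le hT'T hT'K (norm_nonneg E) hE.evalBound))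

/-- for left-invertible `T` with the wandering subspace property,
`w ∈ bpe(T)` iff `supₙ ‖P_{Mₙ} Sₙ(w)|_{ker T*}‖ < ∞`, and in that case
`‖E_w*‖ = supₙ ‖P_{Mₙ} Sₙ(w)|_{ker T*}‖`. -/
theorem stmt_11 [TopologicalSpace.SeparableSpace H] (T T' A : H →L[ℂ] H) (hT : WSP T)
    (hA1 : A ∘L (ContinuousLinearMap.adjoint T ∘L T) = 1)
    (hA2 : (ContinuousLinearMap.adjoint T ∘L T) ∘L A = 1)
    (hT' : T' = T ∘L A) (w : ℂ)
    (M : ℕ → Submodule ℂ H)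
    (hM : ∀ n, M n =
      (⨆ k ∈ Finset.range (n + 1), (kerAdj T).map (T ^ k).toLinearMap).topologicalClosure)
    (P : ℕ → (H →L[ℂ] H)) (hP : ∀ n (x : H), P n x ∈ M n ∧ x - P n x ∈ (M n)ᗮ)
    (S : ℕ → (H →L[ℂ] H))
    (hS : ∀ n, S n = ∑ k ∈ Finset.range (n + 1), (starRingEnd ℂ w) ^ k • (T' ^ k)) :
    (IsBPE T w ↔ ∃ C : ℝ, ∀ n, ‖(P n ∘L S n) ∘L (kerAdj T).subtypeL‖ ≤ C) ∧
    (IsBPE T w → ∀ E : H →L[ℂ] H, IsEval T w E →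
      ‖ContinuousLinearMap.adjoint E‖ = ⨆ n, ‖(P n ∘L S n) ∘L (kerAdj T).subtypeL‖) :=
  stmt_11_general T T' A hT hA2 hT' w M hM P hP S hS
end
end

section
/- Let T be left-invertible with the wandering subspace property and Cauchy dual T'. Set r := inf over nonzero x ∈ ker T* of 1/r_{T'}(x), where r_{T'}(x) = limsup_n ‖T'^n x‖^{1/n} is the local spectral radius. Then the open disc D(0, r) is contained in bpe(T); in particular D(0, r(T')^{-1}) ⊆ bpe(T), where r(T') is the spectral radius of T'. -/
open ContinuousLinearMap Submodule Filter

noncomputable section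

variable {H : Type*} [NormedAddCommGroup H] [InnerProductSpace ℂ H] [CompleteSpace H]

/-!
For `x, y ∈ ker T*` one has `⟪T'ⁿ x, Tᵐ y⟫ = δₙₘ ⟪x, y⟫`. Hence, for a `ker T*`-valued polynomial
`p`, `‖p(w)‖² = ⟪∑ₙ w̄ⁿ T'ⁿ p(w), p(T)⟫`, so `w` is a bounded point evaluation as soon as the
partial sums of `∑ₙ w̄ⁿ T'ⁿ` are uniformly bounded on `ker T*`. By Banach–Steinhaus it suffices
that `∑ₙ |w|ⁿ ‖T'ⁿ x‖` converges for every `x ∈ ker T*`, which follows from the root test when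
`|w| r_{T'}(x) < 1`, and from Gelfand's formula when `|w| r(T') < 1`.
-/

open Finset

lemma summable_pow_mul_of_eventually_root_le {a : ℕ → ℝ} (ha : ∀ n, 0 ≤ a n) {ρ q : ℝ}
    (hρ : 0 ≤ ρ) (hq : 0 ≤ q) (hρq : ρ * q < 1)
    (h : ∀ᶠ n : ℕ in atTop, a n ^ (1 / (n : ℝ)) ≤ q) :
    Summable fun n => ρ ^ n * a n := by
  refine (summable_geometric_of_lt_one (by positivity) hρq).of_norm_bounded_eventually_nat ?_
  filter_upwards [h, eventually_ge_atTop 1] with n hroot hn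
  have hn' : (0 : ℝ) < n := by exact_mod_cast hn
  rw [one_div, Real.rpow_inv_le_iff_of_pos (ha n) hq hn', Real.rpow_natCast] at hroot
  rw [Real.norm_of_nonneg (by have := ha n; positivity), mul_pow]
  gcongr

section LocalSpectralRadius

variable {𝕜 E : Type*} [NontriviallyNormedField 𝕜] [NormedAddCommGroup E] [NormedSpace 𝕜 E]

def localSpectralRadius (S : E →L[𝕜] E) (x : E) : ℝ :=
  atTop.limsup fun n : ℕ => ‖(S ^ n) x‖ ^ (1 / (n : ℝ))

lemma isBoundedUnder_root_norm_pow_apply (S : E →L[𝕜] E) (x : E) :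
    IsBoundedUnder (· ≤ ·) atTop fun n : ℕ => ‖(S ^ n) x‖ ^ (1 / (n : ℝ)) := by
  refine isBoundedUnder_of_eventually_le (a := (‖S‖ + 1) * (‖x‖ + 1)) ?_
  filter_upwards [eventually_ge_atTop 1] with n hn
  have hn' : (0 : ℝ) < n := by exact_mod_cast hn
  rw [one_div, Real.rpow_inv_le_iff_of_pos (norm_nonneg _) (by positivity) hn',
    Real.rpow_natCast, mul_pow]
  calc ‖(S ^ n) x‖ ≤ ‖S‖ ^ n * ‖x‖ :=
        ((S ^ n).le_opNorm x).trans (by gcongr; exact norm_pow_le' S hn)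
    _ ≤ (‖S‖ + 1) ^ n * (‖x‖ + 1) ^ n := by
        gcongr
        · linarith
        · exact (le_add_of_nonneg_right zero_le_one).trans
            (le_self_pow₀ (by linarith [norm_nonneg x]) (by omega))

lemma localSpectralRadius_nonneg (S : E →L[𝕜] E) (x : E) : 0 ≤ localSpectralRadius S x :=
  le_limsup_of_frequently_le (.of_forall fun _ => by positivity)
    (isBoundedUnder_root_norm_pow_apply S x)

lemma summable_pow_mul_norm_pow_apply {S : E →L[𝕜] E} {x : E} {ρ : ℝ} (hρ : 0 ≤ ρ)
    (h : ρ * localSpectralRadius S x < 1) :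
    Summable fun n => ρ ^ n * ‖(S ^ n) x‖ := by
  obtain ⟨q, hq, hρq⟩ : ∃ q, localSpectralRadius S x < q ∧ ρ * q < 1 :=
    (((continuous_const_mul ρ).tendsto _).eventually_lt_const h).exists_gt
  refine summable_pow_mul_of_eventually_root_le (fun _ => norm_nonneg _) hρ
    ((localSpectralRadius_nonneg S x).trans hq.le) hρq ?_
  exact (eventually_lt_of_limsup_lt hq (isBoundedUnder_root_norm_pow_apply S x)).mono
    fun _ => le_of_lt

lemma mul_localSpectralRadius_lt_one {S : E →L[𝕜] E} {x : E} {ρ : ℝ}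
    (h : ρ < (localSpectralRadius S x)⁻¹) : ρ * localSpectralRadius S x < 1 := by
  rcases (localSpectralRadius_nonneg S x).eq_or_lt with hL | hL
  · rw [← hL, mul_zero]
    exact one_pos
  · calc ρ * localSpectralRadius S x
          < (localSpectralRadius S x)⁻¹ * localSpectralRadius S x := by gcongr
      _ = 1 := inv_mul_cancel₀ hL.ne'

end LocalSpectralRadius

lemma summable_pow_mul_norm_pow_of_lt_inv_spectralRadius {A : Type*} [NormedRing A]
    [NormedAlgebra ℂ A] [CompleteSpace A] (a : A) {w : ℂ}
    (hw : (‖w‖₊ : ENNReal) < (spectralRadius ℂ a)⁻¹) :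
    Summable fun n => ‖w‖ ^ n * ‖a ^ n‖ := by
  obtain ⟨q, hq, hqw⟩ := ENNReal.lt_iff_exists_nnreal_btwn.mp (ENNReal.lt_inv_iff_lt_inv.mp hw)
  have hwq : ‖w‖ * q < 1 := by
    rw [← one_div, ENNReal.lt_div_iff_mul_lt (.inr ENNReal.coe_ne_top) (.inl ENNReal.coe_ne_top),
      mul_comm] at hqw
    exact_mod_cast hqw
  refine summable_pow_mul_of_eventually_root_le (fun _ => norm_nonneg _) (norm_nonneg w)
    q.2 hwq ?_
  filter_upwards [(spectrum.pow_norm_pow_one_div_tendsto_nhds_spectralRadius a).eventually_lt_const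
    hq] with n hn
  exact ((ENNReal.ofReal_lt_coe_iff (by positivity)).mp hn).le

lemma exists_bound_norm_sum_of_summable_norm {𝕜 E F : Type*} [NontriviallyNormedField 𝕜]
    [NormedAddCommGroup E] [NormedSpace 𝕜 E] [NormedAddCommGroup F] [NormedSpace 𝕜 F]
    {K : Submodule 𝕜 E} [CompleteSpace K] (S : ℕ → E →L[𝕜] F)
    (h : ∀ x ∈ K, Summable fun n => ‖S n x‖) :
    ∃ C, ∀ x ∈ K, ∀ k, ‖∑ n ∈ range k, S n x‖ ≤ C * ‖x‖ := by
  let partialSum (k : ℕ) : K →L[𝕜] F := (∑ n ∈ range k, S n) ∘L K.subtypeL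
  have partialSum_apply (k : ℕ) (x : K) : partialSum k x = ∑ n ∈ range k, S n x := by
    simp [partialSum]
  obtain ⟨C, hC⟩ := banach_steinhaus (g := partialSum) fun x =>
    ⟨∑' n, ‖S n x‖, fun k => by
      rw [partialSum_apply]
      exact (norm_sum_le _ _).trans
        ((h x x.2).sum_le_tsum _ fun n _ => norm_nonneg _)⟩
  refine ⟨C, fun x hx k => ?_⟩
  simpa only [partialSum_apply, coe_norm, Submodule.coe_mk] using
    (partialSum k).le_of_opNorm_le (hC k) ⟨x, hx⟩

local notation "⟪" x ", " y "⟫" => @inner ℂ _ _ x y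

section CauchyDual

variable {T A : H →L[ℂ] H}

lemma adjoint_apply_comp_apply (hA : (adjoint T ∘L T) ∘L A = 1) (z : H) :
    adjoint T ((T ∘L A) z) = z :=
  congrArg (· z) hA

lemma inner_pow_apply_pow_apply (hA : (adjoint T ∘L T) ∘L A = 1) (k : ℕ) (u v : H) :
    ⟪((T ∘L A) ^ k) u, (T ^ k) v⟫ = ⟪u, v⟫ := by
  induction k generalizing u v with
  | zero => simp
  | succ k ih =>
    rw [pow_succ', pow_succ', mul_apply_eq_comp, mul_apply_eq_comp, ← adjoint_inner_left,
      adjoint_apply_comp_apply hA, ih]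

lemma inner_pow_apply_pow_apply_of_mem_kerAdj (hA : (adjoint T ∘L T) ∘L A = 1) {x y : H}
    (hx : x ∈ kerAdj T) (hy : y ∈ kerAdj T) (n m : ℕ) :
    ⟪((T ∘L A) ^ n) x, (T ^ m) y⟫ = if n = m then ⟪x, y⟫ else 0 := by
  have hx : adjoint T x = 0 := hx
  have hy : adjoint T y = 0 := hy
  rcases lt_trichotomy n m with h | rfl | h
  · obtain ⟨k, rfl⟩ := Nat.exists_eq_add_of_lt h
    rw [if_neg h.ne, add_assoc, pow_add, pow_succ', mul_apply_eq_comp,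
      inner_pow_apply_pow_apply hA, mul_apply_eq_comp, ← adjoint_inner_left, hx, inner_zero_left]
  · rw [if_pos rfl, inner_pow_apply_pow_apply hA]
  · obtain ⟨k, rfl⟩ := Nat.exists_eq_add_of_lt h
    rw [if_neg h.ne', add_assoc, pow_add, pow_succ', mul_apply_eq_comp,
      inner_pow_apply_pow_apply hA, mul_apply_eq_comp, comp_apply, ← adjoint_inner_right, hy,
      inner_zero_right]

lemma inner_sum_smul_pow_apply_sum_pow_apply (hA : (adjoint T ∘L T) ∘L A = 1) (w : ℂ)
    (s : Finset ℕ) {x : H} (hx : x ∈ kerAdj T) {y : ℕ → H} (hy : ∀ n, y n ∈ kerAdj T) :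
    ⟪∑ n ∈ s, (starRingEnd ℂ w) ^ n • ((T ∘L A) ^ n) x, ∑ m ∈ s, (T ^ m) (y m)⟫ =
      ⟪x, ∑ m ∈ s, w ^ m • y m⟫ := by
  rw [sum_inner, inner_sum]
  refine sum_congr rfl fun n hn => ?_
  simp only [inner_sum, inner_smul_left, inner_smul_right, Complex.conj_conj, map_pow,
    inner_pow_apply_pow_apply_of_mem_kerAdj hA hx (hy _), mul_ite, mul_zero, sum_ite_eq,
    if_pos hn]

end CauchyDual

section BoundedPointEvaluation

variable {T A : H →L[ℂ] H}

lemma isBPE_of_norm_sum_smul_pow_apply_le (hA : (adjoint T ∘L T) ∘L A = 1) {w : ℂ} {C : ℝ}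
    (hC : ∀ x ∈ kerAdj T, ∀ k,
      ‖∑ n ∈ range k, (starRingEnd ℂ w) ^ n • ((T ∘L A) ^ n) x‖ ≤ C * ‖x‖) :
    IsBPE T w := by
  refine ⟨max C 1, by positivity, fun k y hy => ?_⟩
  set p := ∑ n ∈ range (k + 1), w ^ n • y n
  set f := ∑ n ∈ range (k + 1), (T ^ n) (y n)
  have hp : p ∈ kerAdj T := sum_mem fun n _ => smul_mem _ _ (hy n)
  have key : ‖p‖ * ‖p‖ ≤ ‖p‖ * (C * ‖f‖) := calc
    ‖p‖ * ‖p‖ = ‖⟪p, p⟫‖ := (inner_self_eq_norm_mul_norm p).symm.trans (inner_self_re_eq_norm p)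
    _ = ‖⟪∑ n ∈ range (k + 1), (starRingEnd ℂ w) ^ n • ((T ∘L A) ^ n) p, f⟫‖ := by
      rw [inner_sum_smul_pow_apply_sum_pow_apply hA w _ hp hy]
    _ ≤ ‖∑ n ∈ range (k + 1), (starRingEnd ℂ w) ^ n • ((T ∘L A) ^ n) p‖ * ‖f‖ :=
      norm_inner_le_norm _ _
    _ ≤ ‖p‖ * (C * ‖f‖) := by
      rw [mul_left_comm, ← mul_assoc]
      gcongr
      exact hC p hp (k + 1)
  rcases (norm_nonneg p).eq_or_lt with hp0 | hp0
  · rw [← hp0]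
    positivity
  · exact (le_of_mul_le_mul_left key hp0).trans (by gcongr; exact le_max_left C 1)

lemma isBPE_of_summable (hA : (adjoint T ∘L T) ∘L A = 1) {w : ℂ}
    (h : ∀ x ∈ kerAdj T, Summable fun n => ‖w‖ ^ n * ‖((T ∘L A) ^ n) x‖) : IsBPE T w := by
  have : CompleteSpace (kerAdj T) := (isClosed_ker (adjoint T)).completeSpace_coe
  obtain ⟨C, hC⟩ := exists_bound_norm_sum_of_summable_norm
    (fun n => (starRingEnd ℂ w) ^ n • (T ∘L A) ^ n) fun x hx => by
      simpa only [smul_apply, norm_smul, norm_pow, RCLike.norm_conj] using h x hx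
  exact isBPE_of_norm_sum_smul_pow_apply_le hA hC

end BoundedPointEvaluation

theorem stmt_12_general (T T' A : H →L[ℂ] H)
    (hA2 : (ContinuousLinearMap.adjoint T ∘L T) ∘L A = 1)
    (hT' : T' = T ∘L A) (r : ℝ)
    (hr : r = sInf {s : ℝ | ∃ x ∈ kerAdj T, x ≠ 0 ∧
      s = (Filter.atTop.limsup fun n : ℕ => ‖(T' ^ n) x‖ ^ (1 / (n : ℝ)))⁻¹}) :
    (∀ w : ℂ, ‖w‖ < r → IsBPE T w) ∧
    (∀ w : ℂ, (‖w‖₊ : ENNReal) < (spectralRadius ℂ T')⁻¹ → IsBPE T w) := by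
  subst hT'
  refine ⟨fun w hw => isBPE_of_summable hA2 fun x hx => ?_,
    fun w hw => isBPE_of_summable hA2 fun x _ => ?_⟩
  · obtain rfl | hx0 := eq_or_ne x 0
    · simp
    have hr_le : r ≤ (localSpectralRadius (T ∘L A) x)⁻¹ := by
      rw [hr]
      refine csInf_le ⟨0, ?_⟩ ⟨x, hx, hx0, rfl⟩
      rintro _ ⟨z, -, -, rfl⟩
      exact inv_nonneg.mpr (localSpectralRadius_nonneg _ z)
    exact summable_pow_mul_norm_pow_apply (norm_nonneg w)
      (mul_localSpectralRadius_lt_one (hw.trans_le hr_le))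
  · refine ((summable_pow_mul_norm_pow_of_lt_inv_spectralRadius _ hw).mul_right ‖x‖)
      |>.of_nonneg_of_le (fun n => by positivity) fun n => ?_
    rw [mul_assoc]
    gcongr
    exact le_opNorm _ x

/-- the open disc `D(0, r)` with `r = inf_{0 ≠ x ∈ ker T*} 1 / r_{T'}(x)` is
contained in `bpe(T)`; in particular `D(0, r(T')⁻¹) ⊆ bpe(T)`. -/
theorem stmt_12 [TopologicalSpace.SeparableSpace H] (T T' A : H →L[ℂ] H) (hT : WSP T)
    (hA1 : A ∘L (ContinuousLinearMap.adjoint T ∘L T) = 1)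
    (hA2 : (ContinuousLinearMap.adjoint T ∘L T) ∘L A = 1)
    (hT' : T' = T ∘L A) (r : ℝ)
    (hr : r = sInf {s : ℝ | ∃ x ∈ kerAdj T, x ≠ 0 ∧
      s = (Filter.atTop.limsup fun n : ℕ => ‖(T' ^ n) x‖ ^ (1 / (n : ℝ)))⁻¹}) :
    (∀ w : ℂ, ‖w‖ < r → IsBPE T w) ∧
    (∀ w : ℂ, (‖w‖₊ : ENNReal) < (spectralRadius ℂ T')⁻¹ → IsBPE T w) :=
  stmt_12_general T T' A hA2 hT' r hr
end
end
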